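/- Let K be a field and d ∈ K, and consider the Temperley–Lieb category over (K,d) (in particular the generic category TL, or any specialization TL(τ)). Then every proper ideal of this category is contained in the set Neg of negligible morphisms. -/
import Mathlib


/-!
Common definitions: the Temperley–Lieb category over a field `K` with loop
parameter `d`.

An `(m,n)`-Temperley–Lieb diagram is a noncrossing perfect matching of `m`
marked points on the top edge and `n` marked points on the bottom edge of a
rectangle.  We encode it as a fixed-point-free involution of
`Fin m ⊕ Fin n` (`Sum.inl i` is the `i`-th top point, `Sum.inr j` the `j`-th
bottom point) which is noncrossing with respect to the boundary order of the
points (top points from left to right, then bottom points from right to left).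
-/

open scoped Classical

namespace TL

/-- The position of a marked point in the linear boundary order of the
rectangle: top points `0, …, m-1` from left to right, then bottom points
from right to left. -/
def bIdx (m n : ℕ) : Fin m ⊕ Fin n → ℕ
  | Sum.inl i => (i : ℕ)
  | Sum.inr j => m + (n - 1 - (j : ℕ))

/-- An `(m,n)`-Temperley–Lieb diagram: a noncrossing perfect matching
(= fixed-point-free involution) of the `m` top points and `n` bottom points. -/
structure Diagram (m n : ℕ) where
  pair : Fin m ⊕ Fin n → Fin m ⊕ Fin n
  involutive : Function.Involutive pair
  fixedPointFree : ∀ x, pair x ≠ x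
  noncrossing : ∀ x y, ¬ (bIdx m n x < bIdx m n y ∧ bIdx m n y < bIdx m n (pair x) ∧
      bIdx m n (pair x) < bIdx m n (pair y))

noncomputable instance (m n : ℕ) : Fintype (Diagram m n) :=
  Fintype.ofInjective (fun D => D.pair)
    (fun a b h => by cases a; cases b; simpa using h)

/-- `Hom K m n` is the `K`-vector space of morphisms from `m` to `n`:
the free vector space on the set of `(m,n)`-TL diagrams, realized as the
space of `K`-valued functions on the (finite) set of diagrams. -/
abbrev Hom (K : Type) [Field K] (m n : ℕ) : Type := Diagram m n → K

variable {K : Type} [Field K]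

/-- The basis vector of `Hom K m n` corresponding to a single diagram. -/
noncomputable def single {m n : ℕ} (p : Diagram m n) : Hom K m n :=
  fun c => if c = p then 1 else 0

/-! ### Composition -/

/-- The marked points of the picture obtained by stacking an `(l,m)`-diagram
on top of an `(m,n)`-diagram: `l` top points, `m` middle points, `n` bottom
points. -/
abbrev Pt (l m n : ℕ) := Fin l ⊕ (Fin m ⊕ Fin n)

/-- One strand of the stacked picture: either a strand of the top diagram `a`
(on the `l` top and `m` middle points) or a strand of the bottom diagram `b`
(on the `m` middle and `n` bottom points). -/
def Step {l m n : ℕ} (a : Diagram l m) (b : Diagram m n) : Pt l m n → Pt l m n → Prop :=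
  fun x y =>
    (∃ u : Fin l ⊕ Fin m, Sum.map id Sum.inl u = x ∧ Sum.map id Sum.inl (a.pair u) = y) ∨
    (∃ u : Fin m ⊕ Fin n, Sum.inr u = x ∧ Sum.inr (b.pair u) = y)

/-- Connectivity in the stacked picture: two marked points are connected if
they are joined by a path of strands. -/
def Conn {l m n : ℕ} (a : Diagram l m) (b : Diagram m n) : Pt l m n → Pt l m n → Prop :=
  Relation.EqvGen (Step a b)

/-- The points of the middle layer whose connected component stays entirely in
the middle layer; these components are exactly the closed loops produced when
stacking. -/
def ClosedMid {l m n : ℕ} (a : Diagram l m) (b : Diagram m n) : Set (Pt l m n) :=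
  {x | (∃ j : Fin m, x = Sum.inr (Sum.inl j)) ∧
    ∀ y, Conn a b x y → ∃ j : Fin m, y = Sum.inr (Sum.inl j)}

/-- The number of closed loops produced when stacking `a` on top of `b`:
the number of connected components consisting entirely of middle points. -/
noncomputable def numLoops {l m n : ℕ} (a : Diagram l m) (b : Diagram m n) : ℕ :=
  Nat.card (Quotient (⟨fun x y : ClosedMid a b => Conn a b x.1 y.1,
    ⟨fun _ => Relation.EqvGen.refl _, fun h => Relation.EqvGen.symm _ _ h,
      fun h h' => Relation.EqvGen.trans _ _ _ h h'⟩⟩ : Setoid (ClosedMid a b)))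

/-- Composition of two diagrams `b ∘ a` (stack `a` on top of `b`, delete the
`r` closed loops, multiply by `d ^ r`), expressed as an element of
`Hom K l n`: the result is `d ^ r` times the unique `(l,n)`-diagram inducing
the same pairing of the outer points as the connectivity of the stacked
picture. -/
noncomputable def compD (d : K) {l m n : ℕ} (b : Diagram m n) (a : Diagram l m) :
    Hom K l n :=
  fun c =>
    if ∀ x : Fin l ⊕ Fin n,
        Conn a b (Sum.map id Sum.inr x) (Sum.map id Sum.inr (c.pair x))
    then d ^ numLoops a b else 0

/-- Composition `b ∘ a : Hom K l n` of `b : Hom K m n` with `a : Hom K l m`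
(bilinear extension of composition of diagrams). -/
noncomputable def comp (d : K) {l m n : ℕ} (b : Hom K m n) (a : Hom K l m) :
    Hom K l n :=
  fun c => ∑ p : Diagram m n, ∑ q : Diagram l m, b p * a q * compD d p q c

/-! ### Tensor product -/

/-- Relabelling of the marked points of a horizontal juxtaposition of an
`(m,n)`-diagram (placed on the left) and an `(m',n')`-diagram (on the right). -/
def tEquiv (m n m' n' : ℕ) :
    (Fin (m + m') ⊕ Fin (n + n')) ≃ ((Fin m ⊕ Fin n) ⊕ (Fin m' ⊕ Fin n')) :=
  (Equiv.sumCongr finSumFinEquiv.symm finSumFinEquiv.symm).trans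
    (Equiv.sumSumSumComm _ _ _ _)

/-- The pairing of the horizontal juxtaposition of two diagrams. -/
def tensorPair {m n m' n' : ℕ} (a : Diagram m n) (b : Diagram m' n') :
    Fin (m + m') ⊕ Fin (n + n') → Fin (m + m') ⊕ Fin (n + n') :=
  fun x => (tEquiv m n m' n').symm (Sum.map a.pair b.pair (tEquiv m n m' n' x))

/-- The tensor product (horizontal juxtaposition) of two diagrams, as an
element of `Hom K (m+m') (n+n')`: the basis vector of the unique diagram whose
pairing is the juxtaposed pairing. -/
noncomputable def tensorD {m n m' n' : ℕ} (a : Diagram m n) (b : Diagram m' n') :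
    Hom K (m + m') (n + n') :=
  fun c => if c.pair = tensorPair a b then 1 else 0

/-- The tensor product of morphisms (bilinear extension of horizontal
juxtaposition of diagrams). -/
noncomputable def tensor {m n m' n' : ℕ} (x : Hom K m n) (y : Hom K m' n') :
    Hom K (m + m') (n + n') :=
  fun c => ∑ p : Diagram m n, ∑ q : Diagram m' n', x p * y q * tensorD p q c

/-! ### Identity, cup and cap -/

/-- The identity diagram `1_n`: `n` vertical strands. -/
def idD (n : ℕ) : Diagram n n where
  pair := Sum.elim Sum.inr Sum.inl
  involutive := by rintro (i | i) <;> rfl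
  fixedPointFree := by rintro (i | i) <;> simp
  noncrossing := by
    rintro (i | i) (j | j) <;>
      · simp only [Sum.elim_inl, Sum.elim_inr, bIdx]
        have hi := i.isLt; have hj := j.isLt; omega

/-- The identity morphism `1_n ∈ T_n`. -/
noncomputable def idHom (K : Type) [Field K] (n : ℕ) : Hom K n n :=
  fun c => if c = idD n then 1 else 0

/-- The cap `∩`: the unique `(0,2)`-TL diagram. -/
def capD : Diagram 0 2 where
  pair := fun x => match x with
    | Sum.inl i => i.elim0
    | Sum.inr j => Sum.inr ⟨1 - (j : ℕ), by omega⟩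
  involutive := by intro x; revert x; decide
  fixedPointFree := by decide
  noncrossing := by decide

/-- The cup `∪`: the unique `(2,0)`-TL diagram. -/
def cupD : Diagram 2 0 where
  pair := fun x => match x with
    | Sum.inl j => Sum.inl ⟨1 - (j : ℕ), by omega⟩
    | Sum.inr i => i.elim0
  involutive := by intro x; revert x; decide
  fixedPointFree := by decide
  noncrossing := by decide

/-- The cap `∩` as a morphism in `Hom K 0 2`. -/
noncomputable def capHom (K : Type) [Field K] : Hom K 0 2 :=
  fun c => if c = capD then 1 else 0

/-- The cup `∪` as a morphism in `Hom K 2 0`. -/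
noncomputable def cupHom (K : Type) [Field K] : Hom K 2 0 :=
  fun c => if c = cupD then 1 else 0

/-! ### The Markov trace -/

/-- The strands of the picture obtained from an `(n,n)`-diagram `p` by closing
it up: joining, for each `i`, the `i`-th top point to the `i`-th bottom point
(by nested arcs passing to the right of the rectangle). -/
def closeStep {n : ℕ} (p : Diagram n n) : (Fin n ⊕ Fin n) → (Fin n ⊕ Fin n) → Prop :=
  fun x y => p.pair x = y ∨ Sum.elim Sum.inr Sum.inl x = y

/-- The number `c(p)` of closed loops of the closure of an `(n,n)`-diagram. -/
noncomputable def trLoops {n : ℕ} (p : Diagram n n) : ℕ :=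
  Nat.card (Quotient (Relation.EqvGen.setoid (closeStep p)))

/-- The Markov trace `Tr_n : T_n → K`, sending a diagram `p` to
`d ^ c(p)`. -/
noncomputable def Tr (d : K) {n : ℕ} (x : Hom K n n) : K :=
  ∑ p : Diagram n n, x p * d ^ trLoops p

/-! ### Conditional expectations -/

/-- The conditional expectation `ε_n : T_{n+1} → T_n`,
`a ↦ (1_n ⊗ ∪) ∘ (a ⊗ 1_1) ∘ (1_n ⊗ ∩)` (closing up the last strand). -/
noncomputable def eps (d : K) (n : ℕ) (a : Hom K (n + 1) (n + 1)) : Hom K n n :=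
  let u : Hom K n (n + 2) := tensor (idHom K n) (capHom K)
  let v : Hom K (n + 2) (n + 2) := @tensor K _ (n + 1) (n + 1) 1 1 a (idHom K 1)
  let w : Hom K (n + 2) n := tensor (idHom K n) (cupHom K)
  comp d w (comp d v u)

/-- The iterated conditional expectation `ε_{n,n+m} = ε_n ∘ ε_{n+1} ∘ ⋯ ∘ ε_{n+m-1} :
T_{n+m} → T_n`. -/
noncomputable def epsIter (d : K) (n : ℕ) : (m : ℕ) → Hom K (n + m) (n + m) → Hom K n n
  | 0, a => a
  | m + 1, a => epsIter d n m (eps d (n + m) a)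

/-! ### Tensor powers of cup and cap -/

/-- `∩^{⊗k} ∈ Hom(0, 2k)`. -/
noncomputable def capPow (K : Type) [Field K] : (k : ℕ) → Hom K 0 (2 * k)
  | 0 => idHom K 0
  | k + 1 => tensor (capPow K k) (capHom K)

/-- `∪^{⊗k} ∈ Hom(2k, 0)`. -/
noncomputable def cupPow (K : Type) [Field K] : (k : ℕ) → Hom K (2 * k) 0
  | 0 => idHom K 0
  | k + 1 => tensor (cupPow K k) (cupHom K)

/-! ### Ideals -/

/-- An ideal of the Temperley–Lieb category over `(K, d)`: a family of vector
subspaces `J m n ⊆ Hom K m n` closed under composition with arbitrary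
morphisms on either side and under tensor product with arbitrary morphisms on
either side. -/
structure IsIdeal (d : K) (J : ∀ m n : ℕ, Set (Hom K m n)) : Prop where
  zero_mem : ∀ m n : ℕ, (0 : Hom K m n) ∈ J m n
  add_mem : ∀ (m n : ℕ), ∀ x ∈ J m n, ∀ y ∈ J m n, x + y ∈ J m n
  smul_mem : ∀ (m n : ℕ) (c : K), ∀ x ∈ J m n, c • x ∈ J m n
  comp_mem_left : ∀ {l m n : ℕ} (b : Hom K m n) (a : Hom K l m),
    a ∈ J l m → comp d b a ∈ J l n
  comp_mem_right : ∀ {l m n : ℕ} (b : Hom K m n) (a : Hom K l m),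
    b ∈ J m n → comp d b a ∈ J l n
  tensor_mem_left : ∀ {m n m' n' : ℕ} (x : Hom K m n) (y : Hom K m' n'),
    x ∈ J m n → tensor x y ∈ J (m + m') (n + n')
  tensor_mem_right : ∀ {m n m' n' : ℕ} (x : Hom K m n) (y : Hom K m' n'),
    y ∈ J m' n' → tensor x y ∈ J (m + m') (n + n')

/-- An ideal is nonzero if some `J m n` contains a nonzero morphism. -/
def IdealNonzero (J : ∀ m n : ℕ, Set (Hom K m n)) : Prop :=
  ∃ (m n : ℕ) (x : Hom K m n), x ∈ J m n ∧ x ≠ 0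

/-- An ideal is proper if it does not contain all morphisms. -/
def IdealProper (J : ∀ m n : ℕ, Set (Hom K m n)) : Prop :=
  ∃ m n : ℕ, J m n ≠ Set.univ

/-- The negligible morphisms: `a ∈ Hom(m,n)` with `Tr_m (b ∘ a) = 0` for all
`b ∈ Hom(n,m)`. -/
def Negl (d : K) (m n : ℕ) : Set (Hom K m n) :=
  {a | ∀ b : Hom K n m, Tr d (comp d b a) = 0}

/-- The ideal generated by a morphism `x ∈ Hom K a b`: the smallest ideal
containing `x`, i.e. the intersection of all ideals containing `x`. -/
def genIdeal (d : K) {a b : ℕ} (x : Hom K a b) (m n : ℕ) : Set (Hom K m n) :=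
  {y | ∀ J : ∀ m' n' : ℕ, Set (Hom K m' n'), IsIdeal d J → x ∈ J a b → y ∈ J m n}

/-! ### Jones–Wenzl idempotents -/

/-- The diagram `E_i ∈ T_n` (here `i` is 0-indexed, `i + 1 < n`): it joins the
`i`-th and `(i+1)`-st top points, the `i`-th and `(i+1)`-st bottom points, and
joins the `j`-th top point vertically to the `j`-th bottom point for all other
`j`; encoded as a pairing function. -/
def eiPair (n i : ℕ) : Fin n ⊕ Fin n → Fin n ⊕ Fin n
  | Sum.inl j =>
      if (j : ℕ) = i then
        Sum.inl ⟨((j : ℕ) + 1) % n, Nat.mod_lt _ (Nat.lt_of_le_of_lt (Nat.zero_le _) j.isLt)⟩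
      else if (j : ℕ) = i + 1 then
        Sum.inl ⟨(j : ℕ) - 1, Nat.lt_of_le_of_lt (Nat.sub_le _ _) j.isLt⟩
      else Sum.inr j
  | Sum.inr j =>
      if (j : ℕ) = i then
        Sum.inr ⟨((j : ℕ) + 1) % n, Nat.mod_lt _ (Nat.lt_of_le_of_lt (Nat.zero_le _) j.isLt)⟩
      else if (j : ℕ) = i + 1 then
        Sum.inr ⟨(j : ℕ) - 1, Nat.lt_of_le_of_lt (Nat.sub_le _ _) j.isLt⟩
      else Sum.inl j

/-- The morphism `E_i ∈ T_n` (0-indexed `i`). -/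
noncomputable def EHom (K : Type) [Field K] (n i : ℕ) : Hom K n n :=
  fun c => if c.pair = eiPair n i then 1 else 0

/-- A Jones–Wenzl idempotent in `T_n`: a nonzero idempotent `p` with
`E_i ∘ p = p ∘ E_i = 0` for all `i` (1-indexed `1 ≤ i ≤ n-1`; here `i` is
0-indexed, so `i + 2 ≤ n`). -/
def IsJonesWenzl (d : K) (n : ℕ) (p : Hom K n n) : Prop :=
  p ≠ 0 ∧ comp d p p = p ∧
    ∀ i : ℕ, i + 2 ≤ n → comp d (EHom K n i) p = 0 ∧ comp d p (EHom K n i) = 0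

/-- The quantum integers `[k] ∈ K`: `[0] = 0`, `[1] = 1`,
`[k+1] = d·[k] − [k−1]`. -/
def qInt (d : K) : ℕ → K
  | 0 => 0
  | 1 => 1
  | k + 2 => d * qInt d (k + 1) - qInt d k


/-! ### Auxiliary material -/

theorem Diagram.ext' {m n : ℕ} {a b : Diagram m n} (h : a.pair = b.pair) : a = b := by
  cases a; cases b; simpa using h

/-- The unique `(0,0)`-diagram. -/
def emptyD : Diagram 0 0 where
  pair := Sum.elim Fin.elim0 Fin.elim0
  involutive := by rintro (i | i) <;> exact i.elim0
  fixedPointFree := by rintro (i | i) <;> exact i.elim0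
  noncrossing := by rintro (i | i) <;> exact i.elim0

theorem eq_emptyD (c : Diagram 0 0) : c = emptyD :=
  Diagram.ext' (funext fun x => by rcases x with i | i <;> exact i.elim0)

theorem tEquiv_symm_inl {m n m' n' : ℕ} (z : Fin m ⊕ Fin n) :
    (tEquiv m n m' n').symm (Sum.inl z) = Sum.map (Fin.castAdd m') (Fin.castAdd n') z := by
  rcases z with i | j <;> rfl

theorem tEquiv_symm_inr {m n m' n' : ℕ} (z : Fin m' ⊕ Fin n') :
    (tEquiv m n m' n').symm (Sum.inr z) = Sum.map (Fin.natAdd m) (Fin.natAdd n) z := by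
  rcases z with i | j <;> rfl


/-- `bIdx` is bounded. -/
theorem bIdx_lt {m n : ℕ} (z : Fin m ⊕ Fin n) : bIdx m n z < m + n := by
  rcases z with i | j <;> simp [bIdx] <;> omega

theorem bIdx_injective {m n : ℕ} : Function.Injective (bIdx m n) := by
  rintro (i | i) (j | j) h <;> simp [bIdx] at h ⊢ <;>
    first
    | exact Fin.ext h
    | (exact absurd h (by have := i.isLt; have := j.isLt; omega))
    | (exact Fin.ext (by have := i.isLt; have := j.isLt; omega))

/-- Position shift for the left factor of a tensor. -/
def psi (m k t : ℕ) : ℕ := if t < m then t else t + k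

theorem psi_lt_psi {m k s t : ℕ} : psi m k s < psi m k t ↔ s < t := by
  unfold psi; split_ifs <;> omega

theorem bIdx_tensor_inl {m n m' n' : ℕ} (z : Fin m ⊕ Fin n) :
    bIdx (m + m') (n + n') ((tEquiv m n m' n').symm (Sum.inl z)) =
      psi m (m' + n') (bIdx m n z) := by
  rcases z with i | j
  · simp [tEquiv_symm_inl, bIdx, psi, Fin.castAdd, Fin.castLE]
  · simp [tEquiv_symm_inl, bIdx, psi, Fin.castAdd, Fin.castLE]
    have := j.isLt; omega

theorem bIdx_tensor_inr {m n m' n' : ℕ} (z : Fin m' ⊕ Fin n') :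
    bIdx (m + m') (n + n') ((tEquiv m n m' n').symm (Sum.inr z)) =
      m + bIdx m' n' z := by
  rcases z with i | j
  · simp [tEquiv_symm_inr, bIdx, Fin.natAdd]
  · simp [tEquiv_symm_inr, bIdx, Fin.natAdd]
    have := j.isLt; omega


theorem psi_out (m k t : ℕ) : psi m k t < m ∨ m + k ≤ psi m k t := by
  unfold psi; split_ifs <;> omega

theorem tensorPair_symm_apply {m n m' n' : ℕ} (a : Diagram m n) (b : Diagram m' n')
    (w : (Fin m ⊕ Fin n) ⊕ (Fin m' ⊕ Fin n')) :
    tensorPair a b ((tEquiv m n m' n').symm w) =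
      (tEquiv m n m' n').symm (Sum.map a.pair b.pair w) := by
  unfold tensorPair; rw [Equiv.apply_symm_apply]

/-- The tensor product of two diagrams as a diagram. -/
def tensorDiag {m n m' n' : ℕ} (a : Diagram m n) (b : Diagram m' n') :
    Diagram (m + m') (n + n') where
  pair := tensorPair a b
  involutive := by
    intro x
    rw [← Equiv.symm_apply_apply (tEquiv m n m' n') x, tensorPair_symm_apply,
      tensorPair_symm_apply, Sum.map_map, a.involutive.comp_self, b.involutive.comp_self,
      Sum.map_id_id]
    simp
  fixedPointFree := by
    intro x h
    rw [← Equiv.symm_apply_apply (tEquiv m n m' n') x, tensorPair_symm_apply] at h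
    have h2 := (tEquiv m n m' n').symm.injective h
    rcases h3 : tEquiv m n m' n' x with z | z <;> rw [h3] at h2
    · exact a.fixedPointFree z (by simpa using h2)
    · exact b.fixedPointFree z (by simpa using h2)
  noncrossing := by
    intro x y hc
    obtain ⟨w, rfl⟩ : ∃ w, x = (tEquiv m n m' n').symm w :=
      ⟨_, (Equiv.symm_apply_apply _ x).symm⟩
    obtain ⟨v, rfl⟩ : ∃ v, y = (tEquiv m n m' n').symm v :=
      ⟨_, (Equiv.symm_apply_apply _ y).symm⟩
    rw [tensorPair_symm_apply, tensorPair_symm_apply] at hc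
    obtain ⟨h1, h2, h3⟩ := hc
    rcases w with z | z <;> rcases v with z' | z' <;>
      simp only [Sum.map_inl, Sum.map_inr, bIdx_tensor_inl, bIdx_tensor_inr] at h1 h2 h3
    · rw [psi_lt_psi] at h1 h2 h3
      exact a.noncrossing z z' ⟨h1, h2, h3⟩
    · have b1 := bIdx_lt z'
      have b2 := bIdx_lt (b.pair z')
      rcases psi_out m (m' + n') (bIdx m n z) with h | h <;>
        rcases psi_out m (m' + n') (bIdx m n (a.pair z)) with h' | h' <;> omega
    · have b1 := bIdx_lt z
      have b2 := bIdx_lt (b.pair z)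
      rcases psi_out m (m' + n') (bIdx m n z') with h | h <;>
        rcases psi_out m (m' + n') (bIdx m n (a.pair z')) with h' | h' <;> omega
    · exact b.noncrossing z z' ⟨by omega, by omega, by omega⟩


/-- Nested cap diagram in `Hom 0 (m+m)`: bottom `j` joined to bottom `m+m-1-j`. -/
def capN (m : ℕ) : Diagram 0 (m + m) where
  pair := Sum.elim Fin.elim0 (fun j => Sum.inr ⟨m + m - 1 - j, by have := j.isLt; omega⟩)
  involutive := by
    rintro (i | j)
    · exact i.elim0
    · have := j.isLt
      simp only [Sum.elim_inr, Sum.inr.injEq]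
      exact Fin.ext (by simp; omega)
  fixedPointFree := by
    rintro (i | j) h
    · exact i.elim0
    · have := j.isLt
      simp only [Sum.elim_inr, Sum.inr.injEq] at h
      have := congrArg Fin.val h
      simp at this; omega
  noncrossing := by
    rintro (i | a) (i | b) ⟨h1, h2, h3⟩ <;> try exact i.elim0
    have ha := a.isLt; have hb := b.isLt
    simp only [Sum.elim_inr, bIdx] at h1 h2 h3
    omega

/-- Nested cup diagram in `Hom (m+m) 0`. -/
def cupN (m : ℕ) : Diagram (m + m) 0 where
  pair := Sum.elim (fun j => Sum.inl ⟨m + m - 1 - j, by have := j.isLt; omega⟩) Fin.elim0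
  involutive := by
    rintro (j | i)
    · have := j.isLt
      simp only [Sum.elim_inl, Sum.inl.injEq]
      exact Fin.ext (by simp; omega)
    · exact i.elim0
  fixedPointFree := by
    rintro (j | i) h
    · have := j.isLt
      simp only [Sum.elim_inl, Sum.inl.injEq] at h
      have := congrArg Fin.val h
      simp at this; omega
    · exact i.elim0
  noncrossing := by
    rintro (a | i) (b | i) ⟨h1, h2, h3⟩ <;> try exact i.elim0
    have ha := a.isLt; have hb := b.isLt
    simp only [Sum.elim_inl, bIdx] at h1 h2 h3
    omega

/-- Relabelling the points of an `(m,m)`-diagram as the `m+m` bottom points of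
its closure. -/
def eP (m : ℕ) : (Fin m ⊕ Fin m) ≃ Fin (m + m) where
  toFun z := Sum.elim (fun i : Fin m => (⟨m + m - 1 - i, by have := i.isLt; omega⟩ : Fin (m + m)))
    (fun j : Fin m => (⟨j, by have := j.isLt; omega⟩ : Fin (m + m))) z
  invFun j := if h : (j : ℕ) < m then Sum.inr ⟨j, h⟩
    else Sum.inl ⟨m + m - 1 - j, by have := j.isLt; omega⟩
  left_inv := by
    rintro (i | j) <;> dsimp only [Sum.elim_inl, Sum.elim_inr]
    · have := i.isLt
      rw [dif_neg (by simp; omega)]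
      simp only [Sum.inl.injEq]
      exact Fin.ext (by simp; omega)
    · have := j.isLt
      rw [dif_pos (by simpa using this)]
  right_inv := by
    intro j
    have := j.isLt
    dsimp only
    by_cases h : (j : ℕ) < m
    · rw [dif_pos h, Sum.elim_inr]
    · rw [dif_neg h, Sum.elim_inl]
      exact Fin.ext (by simp; omega)

theorem bIdx_eP {m : ℕ} (z : Fin m ⊕ Fin m) :
    bIdx 0 (m + m) (Sum.inr (eP m z)) = bIdx m m z := by
  rcases z with i | j
  · have := i.isLt; simp [eP, bIdx]; omega
  · have := j.isLt; simp [eP, bIdx]; omega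

/-- The closure of an `(m,m)`-diagram, as a `(0, m+m)`-diagram. -/
def closeD {m : ℕ} (p : Diagram m m) : Diagram 0 (m + m) where
  pair := Sum.elim Fin.elim0 (fun j => Sum.inr (eP m (p.pair ((eP m).symm j))))
  involutive := by
    rintro (i | j)
    · exact i.elim0
    · simp [p.involutive _]
  fixedPointFree := by
    rintro (i | j) h
    · exact i.elim0
    · simp only [Sum.elim_inr, Sum.inr.injEq] at h
      have : p.pair ((eP m).symm j) = (eP m).symm j := by
        have := congrArg (eP m).symm h
        simpa using this
      exact p.fixedPointFree _ this
  noncrossing := by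
    rintro (i | a) (i | b) hc <;> try exact i.elim0
    obtain ⟨z, rfl⟩ : ∃ z, a = eP m z := ⟨(eP m).symm a, ((eP m).apply_symm_apply a).symm⟩
    obtain ⟨z', rfl⟩ : ∃ z, b = eP m z := ⟨(eP m).symm b, ((eP m).apply_symm_apply b).symm⟩
    simp only [Sum.elim_inr, Equiv.symm_apply_apply, bIdx_eP] at hc
    exact p.noncrossing z z' hc


/-! ### Morphism-level computations -/

theorem tensorD_eq {m n m' n' : ℕ} (a : Diagram m n) (b : Diagram m' n') :
    tensorD (K := K) a b = single (tensorDiag a b) := by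
  funext c
  unfold tensorD single
  by_cases h : c = tensorDiag a b
  · subst h
    rw [if_pos (show (tensorDiag a b).pair = tensorPair a b from rfl), if_pos rfl]
  · rw [if_neg (show ¬ c.pair = tensorPair a b from fun hp => h (Diagram.ext' hp)), if_neg h]

theorem tensor_single_right {m n m' n' : ℕ} (X : Hom K m n) (b₀ : Diagram m' n') :
    tensor X (single b₀) = fun c => ∑ p, X p * single (tensorDiag p b₀) c := by
  funext c
  unfold tensor
  refine Finset.sum_congr rfl fun p _ => ?_
  rw [← tensorD_eq]
  rw [Finset.sum_eq_single b₀ (fun q _ hq => by simp [single, hq]) (by simp)]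
  simp [single]

theorem comp_single_right {l m n : ℕ} (d : K) (B : Hom K m n) (a₀ : Diagram l m) :
    comp d B (single a₀) = fun c => ∑ P, B P * compD d P a₀ c := by
  funext c
  unfold comp
  refine Finset.sum_congr rfl fun P _ => ?_
  rw [Finset.sum_eq_single a₀ (fun q _ hq => by simp [single, hq]) (by simp)]
  simp [single]

theorem comp_single_left {l m n : ℕ} (d : K) (b₀ : Diagram m n) (A : Hom K l m) :
    comp d (single b₀) A = fun c => ∑ Q, A Q * compD d b₀ Q c := by
  funext c
  unfold comp
  rw [Finset.sum_eq_single b₀ (fun P _ hP => by simp [single, hP]) (by simp)]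
  refine Finset.sum_congr rfl fun q _ => by simp [single]

/-! ### The pairing of `p ⊗ 1_m` -/

theorem tp_top_left {m : ℕ} (p : Diagram m m) (j : Fin (m + m)) (hj : (j : ℕ) < m) :
    (tensorDiag p (idD m)).pair (Sum.inl j) =
      Sum.map (Fin.castAdd m) (Fin.castAdd m) (p.pair (Sum.inl ⟨j, hj⟩)) := by
  have h0 : Sum.inl (α := Fin (m + m)) (β := Fin (m + m)) j =
      (tEquiv m m m m).symm (Sum.inl (Sum.inl ⟨j, hj⟩)) := by
    rw [tEquiv_symm_inl]; rfl
  show tensorPair p (idD m) _ = _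
  rw [h0, tensorPair_symm_apply, Sum.map_inl, tEquiv_symm_inl]

theorem tp_top_right {m : ℕ} (p : Diagram m m) (j : Fin (m + m)) (hj : ¬ (j : ℕ) < m) :
    (tensorDiag p (idD m)).pair (Sum.inl j) = Sum.inr j := by
  have hj2 : (j : ℕ) - m < m := by have := j.isLt; omega
  have h0 : Sum.inl (α := Fin (m + m)) (β := Fin (m + m)) j =
      (tEquiv m m m m).symm (Sum.inr (Sum.inl ⟨(j : ℕ) - m, hj2⟩)) := by
    rw [tEquiv_symm_inr]
    simp only [Sum.map_inl, Sum.inl.injEq]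
    exact (Fin.ext (by simp [Fin.natAdd]; omega))
  show tensorPair p (idD m) _ = _
  rw [h0, tensorPair_symm_apply, Sum.map_inr, tEquiv_symm_inr]
  show Sum.inr (Fin.natAdd m _) = _
  simp only [Sum.inr.injEq]
  exact Fin.ext (by simp [Fin.natAdd]; omega)

theorem tp_bot_left {m : ℕ} (p : Diagram m m) (j : Fin (m + m)) (hj : (j : ℕ) < m) :
    (tensorDiag p (idD m)).pair (Sum.inr j) =
      Sum.map (Fin.castAdd m) (Fin.castAdd m) (p.pair (Sum.inr ⟨j, hj⟩)) := by
  have h0 : Sum.inr (α := Fin (m + m)) (β := Fin (m + m)) j =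
      (tEquiv m m m m).symm (Sum.inl (Sum.inr ⟨j, hj⟩)) := by
    rw [tEquiv_symm_inl]; rfl
  show tensorPair p (idD m) _ = _
  rw [h0, tensorPair_symm_apply, Sum.map_inl, tEquiv_symm_inl]

theorem tp_bot_right {m : ℕ} (p : Diagram m m) (j : Fin (m + m)) (hj : ¬ (j : ℕ) < m) :
    (tensorDiag p (idD m)).pair (Sum.inr j) = Sum.inl j := by
  have hj2 : (j : ℕ) - m < m := by have := j.isLt; omega
  have h0 : Sum.inr (α := Fin (m + m)) (β := Fin (m + m)) j =
      (tEquiv m m m m).symm (Sum.inr (Sum.inr ⟨(j : ℕ) - m, hj2⟩)) := by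
    rw [tEquiv_symm_inr]
    simp only [Sum.map_inr, Sum.inr.injEq]
    exact (Fin.ext (by simp [Fin.natAdd]; omega))
  show tensorPair p (idD m) _ = _
  rw [h0, tensorPair_symm_apply, Sum.map_inr, tEquiv_symm_inr]
  show Sum.inl (Fin.natAdd m _) = _
  simp only [Sum.inl.injEq]
  exact Fin.ext (by simp [Fin.natAdd]; omega)


/-! ### Connectivity analysis for `(p ⊗ 1_m) ∘ ∩_m` -/

theorem step_cap {m : ℕ} (B : Diagram (m + m) (m + m)) (j k : Fin (m + m))
    (hk : (k : ℕ) = m + m - 1 - (j : ℕ)) :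
    Step (capN m) B (Sum.inr (Sum.inl j)) (Sum.inr (Sum.inl k)) := by
  refine Or.inl ⟨Sum.inr j, rfl, ?_⟩
  show Sum.map id Sum.inl ((capN m).pair (Sum.inr j)) = _
  show Sum.map id Sum.inl (Sum.inr _) = _
  rw [Sum.map_inr]
  exact congrArg _ (congrArg _ (Fin.ext hk.symm))

theorem step_bstr {m : ℕ} (B : Diagram (m + m) (m + m)) (u : Fin (m + m) ⊕ Fin (m + m)) :
    Step (capN m) B (Sum.inr u) (Sum.inr (B.pair u)) :=
  Or.inr ⟨u, rfl, rfl⟩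

/-- Which point of `p` a point of the stacked picture of `(p ⊗ 1_m) ∘ ∩_m`
belongs to. -/
def rho (m : ℕ) : Pt 0 (m + m) (m + m) → Fin m ⊕ Fin m
  | .inl i => i.elim0
  | .inr (.inl j) => Sum.inl ⟨if (j : ℕ) < m then (j : ℕ) else m + m - 1 - (j : ℕ),
      by have := j.isLt; split <;> omega⟩
  | .inr (.inr j) => (eP m).symm j

/-- Canonical representative of the `p`-arc through `z`. -/
def canon {m : ℕ} (p : Diagram m m) (z : Fin m ⊕ Fin m) : Fin m ⊕ Fin m :=
  if bIdx m m z ≤ bIdx m m (p.pair z) then z else p.pair z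

theorem canon_pair {m : ℕ} (p : Diagram m m) (z : Fin m ⊕ Fin m) :
    canon p (p.pair z) = canon p z := by
  unfold canon
  rw [p.involutive z]
  rcases le_or_gt (bIdx m m z) (bIdx m m (p.pair z)) with h | h
  · rw [if_pos h]
    by_cases h2 : bIdx m m (p.pair z) ≤ bIdx m m z
    · rw [if_pos h2]
      exact bIdx_injective (le_antisymm h2 h)
    · rw [if_neg h2]
  · rw [if_neg (not_le.mpr h), if_pos h.le]

theorem canon_cases {m : ℕ} (p : Diagram m m) (z : Fin m ⊕ Fin m) :
    canon p z = z ∨ canon p z = p.pair z := by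
  unfold canon; split
  · exact Or.inl rfl
  · exact Or.inr rfl

theorem canon_eq_imp {m : ℕ} (p : Diagram m m) {z w : Fin m ⊕ Fin m}
    (h : canon p z = canon p w) : w = z ∨ w = p.pair z := by
  rcases canon_cases p z with hz | hz <;> rcases canon_cases p w with hw | hw <;>
    rw [hz, hw] at h
  · exact Or.inl h.symm
  · exact Or.inr (by rw [h, p.involutive w])
  · exact Or.inr h.symm
  · exact Or.inl (p.involutive.injective h).symm


theorem eP_symm_lt {m : ℕ} (j : Fin (m + m)) (hj : (j : ℕ) < m) :
    (eP m).symm j = Sum.inr ⟨j, hj⟩ := by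
  show (if h : (j : ℕ) < m then _ else _) = _
  rw [dif_pos hj]

theorem eP_symm_ge {m : ℕ} (j : Fin (m + m)) (hj : ¬ (j : ℕ) < m) :
    (eP m).symm j = Sum.inl ⟨m + m - 1 - (j : ℕ), by have := j.isLt; omega⟩ := by
  show (if h : (j : ℕ) < m then _ else _) = _
  rw [dif_neg hj]

theorem rho_mid_lt {m : ℕ} (j : Fin (m + m)) (hj : (j : ℕ) < m) :
    rho m (Sum.inr (Sum.inl j)) = Sum.inl ⟨(j : ℕ), hj⟩ := by
  unfold rho
  exact congrArg _ (Fin.ext (by simp [hj]))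

theorem rho_mid_ge {m : ℕ} (j : Fin (m + m)) (hj : ¬ (j : ℕ) < m) :
    rho m (Sum.inr (Sum.inl j)) = Sum.inl ⟨m + m - 1 - (j : ℕ), by have := j.isLt; omega⟩ := by
  unfold rho
  exact congrArg _ (Fin.ext (by simp [hj]))

theorem rho_bot {m : ℕ} (j : Fin (m + m)) : rho m (Sum.inr (Sum.inr j)) = (eP m).symm j := rfl

theorem step_phi {m : ℕ} (p : Diagram m m) {x y : Pt 0 (m + m) (m + m)}
    (h : Step (capN m) (tensorDiag p (idD m)) x y) :
    canon p (rho m x) = canon p (rho m y) := by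
  rcases h with ⟨u, hx, hy⟩ | ⟨u, hx, hy⟩
  · -- cap strand
    rcases u with i | j
    · exact i.elim0
    · subst hx; subst hy
      show canon p (rho m (Sum.inr (Sum.inl j))) =
        canon p (rho m (Sum.inr (Sum.inl ⟨m + m - 1 - (j : ℕ), by have := j.isLt; omega⟩)))
      have hj1 := j.isLt
      by_cases hj : (j : ℕ) < m
      · rw [rho_mid_lt j hj, rho_mid_ge _ (by simp; omega)]
        exact congrArg _ (congrArg _ (Fin.ext (by simp; omega)))
      · rw [rho_mid_ge j hj, rho_mid_lt _ (by simp; omega)]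
  · -- strand of p ⊗ 1
    subst hx; subst hy
    rcases u with j | j <;> by_cases hj : (j : ℕ) < m
    · rw [tp_top_left p j hj]
      rcases hs : p.pair (Sum.inl ⟨j, hj⟩) with i' | j'
      · rw [Sum.map_inl, rho_mid_lt j hj, rho_mid_lt (Fin.castAdd m i') i'.isLt]
        rw [show (Sum.inl (⟨((Fin.castAdd m i' : Fin (m+m)) : ℕ), i'.isLt⟩ : Fin m) :
          Fin m ⊕ Fin m) = Sum.inl i' from congrArg _ (Fin.ext rfl)]
        rw [← hs]
        exact (canon_pair p _).symm
      · rw [Sum.map_inr, rho_mid_lt j hj, rho_bot, eP_symm_lt (Fin.castAdd m j') j'.isLt]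
        rw [show (Sum.inr (⟨((Fin.castAdd m j' : Fin (m+m)) : ℕ), j'.isLt⟩ : Fin m) :
          Fin m ⊕ Fin m) = Sum.inr j' from congrArg _ (Fin.ext rfl)]
        rw [← hs]
        exact (canon_pair p _).symm
    · rw [tp_top_right p j hj, rho_mid_ge j hj, rho_bot, eP_symm_ge j hj]
    · rw [tp_bot_left p j hj]
      rcases hs : p.pair (Sum.inr ⟨j, hj⟩) with i' | j'
      · rw [Sum.map_inl, rho_bot, eP_symm_lt j hj, rho_mid_lt (Fin.castAdd m i') i'.isLt]
        rw [show (Sum.inl (⟨((Fin.castAdd m i' : Fin (m+m)) : ℕ), i'.isLt⟩ : Fin m) :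
          Fin m ⊕ Fin m) = Sum.inl i' from congrArg _ (Fin.ext rfl)]
        rw [← hs]
        exact (canon_pair p _).symm
      · rw [Sum.map_inr, rho_bot, eP_symm_lt j hj, rho_bot, eP_symm_lt (Fin.castAdd m j') j'.isLt]
        rw [show (Sum.inr (⟨((Fin.castAdd m j' : Fin (m+m)) : ℕ), j'.isLt⟩ : Fin m) :
          Fin m ⊕ Fin m) = Sum.inr j' from congrArg _ (Fin.ext rfl)]
        rw [← hs]
        exact (canon_pair p _).symm
    · rw [tp_bot_right p j hj, rho_bot, eP_symm_ge j hj, rho_mid_ge j hj]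


theorem conn_phi {m : ℕ} (p : Diagram m m) {x y : Pt 0 (m + m) (m + m)}
    (h : Conn (capN m) (tensorDiag p (idD m)) x y) :
    canon p (rho m x) = canon p (rho m y) := by
  induction h with
  | rel _ _ hs => exact step_phi p hs
  | refl => rfl
  | symm _ _ _ ih => exact ih.symm
  | trans _ _ _ _ _ ih1 ih2 => exact ih1.trans ih2

theorem mid_conn_outer {m : ℕ} (p : Diagram m m) (j : Fin (m + m)) :
    ∃ b : Fin (m + m), Conn (capN m) (tensorDiag p (idD m))
      (Sum.inr (Sum.inl j)) (Sum.inr (Sum.inr b)) := by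
  have hj1 := j.isLt
  by_cases hj : (j : ℕ) < m
  · set k : Fin (m + m) := ⟨m + m - 1 - (j : ℕ), by omega⟩ with hk
    have h1 := step_cap (tensorDiag p (idD m)) j k rfl
    have h2 := step_bstr (tensorDiag p (idD m)) (Sum.inl k)
    rw [tp_top_right p k (by simp [hk]; omega)] at h2
    exact ⟨k, Relation.EqvGen.trans _ _ _ (Relation.EqvGen.rel _ _ h1)
      (Relation.EqvGen.rel _ _ h2)⟩
  · have h2 := step_bstr (tensorDiag p (idD m)) (Sum.inl j)
    rw [tp_top_right p j hj] at h2
    exact ⟨j, Relation.EqvGen.rel _ _ h2⟩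

theorem numLoops_inner {m : ℕ} (p : Diagram m m) :
    numLoops (capN m) (tensorDiag p (idD m)) = 0 := by
  haveI he : IsEmpty (ClosedMid (capN m) (tensorDiag p (idD m))) := by
    constructor
    rintro ⟨x, ⟨⟨j, rfl⟩, hall⟩⟩
    obtain ⟨b, hc⟩ := mid_conn_outer p j
    obtain ⟨j', hj'⟩ := hall _ hc
    simp at hj'
  unfold numLoops
  haveI : IsEmpty (Quotient (⟨fun x y : ClosedMid (capN m) (tensorDiag p (idD m)) =>
      Conn (capN m) (tensorDiag p (idD m)) x.1 y.1,
      ⟨fun _ => Relation.EqvGen.refl _, fun h => Relation.EqvGen.symm _ _ h,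
        fun h h' => Relation.EqvGen.trans _ _ _ h h'⟩⟩ : Setoid _)) :=
    ⟨fun q => Quotient.inductionOn q fun x => isEmptyElim x⟩
  exact Nat.card_of_isEmpty


theorem conn_step {l m n : ℕ} {a : Diagram l m} {b : Diagram m n} {x y : Pt l m n}
    (h : Step a b x y) : Conn a b x y := Relation.EqvGen.rel _ _ h

theorem conn_trans {l m n : ℕ} {a : Diagram l m} {b : Diagram m n} {x y z : Pt l m n}
    (h : Conn a b x y) (h' : Conn a b y z) : Conn a b x z := Relation.EqvGen.trans _ _ _ h h'

theorem closeD_pair {m : ℕ} (p : Diagram m m) (j : Fin (m + m)) :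
    (closeD p).pair (Sum.inr j) = Sum.inr (eP m (p.pair ((eP m).symm j))) := rfl

set_option maxHeartbeats 1000000 in
theorem inner_cond {m : ℕ} (p : Diagram m m) (c : Diagram 0 (m + m)) :
    (∀ x : Fin 0 ⊕ Fin (m + m),
        Conn (capN m) (tensorDiag p (idD m)) (Sum.map id Sum.inr x)
          (Sum.map id Sum.inr (c.pair x)))
      ↔ c = closeD p := by
  constructor
  · intro h
    refine Diagram.ext' (funext fun x => ?_)
    rcases x with i | j
    · exact i.elim0
    · have hc := h (Sum.inr j)
      rcases hp : c.pair (Sum.inr j) with i | j₂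
      · exact i.elim0
      · rw [hp] at hc
        have hphi := conn_phi p hc
        rw [show Sum.map id Sum.inr (Sum.inr j) = (Sum.inr (Sum.inr j) : Pt 0 (m+m) (m+m)) from rfl,
          show Sum.map id Sum.inr (Sum.inr j₂) = (Sum.inr (Sum.inr j₂) : Pt 0 (m+m) (m+m)) from rfl,
          rho_bot, rho_bot] at hphi
        rcases canon_eq_imp p hphi with he | he
        · exfalso
          have hj : j₂ = j := (eP m).symm.injective he
          exact c.fixedPointFree (Sum.inr j) (by rw [hp, hj])
        · rw [closeD_pair]
          exact congrArg _ (by rw [← he]; simp)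
  · rintro rfl
    intro x
    rcases x with i | j
    · exact i.elim0
    · show Conn _ _ (Sum.inr (Sum.inr j)) (Sum.map id Sum.inr ((closeD p).pair (Sum.inr j)))
      rw [closeD_pair]
      show Conn _ _ _ (Sum.inr (Sum.inr (eP m (p.pair ((eP m).symm j)))))
      have hj1 := j.isLt
      by_cases hj : (j : ℕ) < m
      · rw [eP_symm_lt j hj]
        rcases hs : p.pair (Sum.inr ⟨j, hj⟩) with i₁ | j₁
        · -- three steps
          have h1 := step_bstr (tensorDiag p (idD m)) (Sum.inr j)
          rw [tp_bot_left p j hj, hs, Sum.map_inl] at h1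
          set k : Fin (m + m) := ⟨m + m - 1 - (i₁ : ℕ), by have := i₁.isLt; omega⟩ with hk
          have h2 := step_cap (tensorDiag p (idD m)) (Fin.castAdd m i₁) k rfl
          have h3 := step_bstr (tensorDiag p (idD m)) (Sum.inl k)
          rw [tp_top_right p k (by simp [hk]; have := i₁.isLt; omega)] at h3
          have : eP m (Sum.inl i₁) = k := rfl
          rw [this]
          exact Relation.EqvGen.trans _ _ _ (Relation.EqvGen.rel _ _ h1)
            (Relation.EqvGen.trans _ _ _ (Relation.EqvGen.rel _ _ h2)
              (Relation.EqvGen.rel _ _ h3))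
        · have h1 := step_bstr (tensorDiag p (idD m)) (Sum.inr j)
          rw [tp_bot_left p j hj, hs, Sum.map_inr] at h1
          have : eP m (Sum.inr j₁) = Fin.castAdd m j₁ := rfl
          rw [this]
          exact Relation.EqvGen.rel _ _ h1
      · rw [eP_symm_ge j hj]
        have h1 := step_bstr (tensorDiag p (idD m)) (Sum.inr j)
        rw [tp_bot_right p j hj] at h1
        have hlt0 : m + m - 1 - (j : ℕ) < m + m := by omega
        have hlt0' : m + m - 1 - (j : ℕ) < m := by omega
        have h2 := step_cap (tensorDiag p (idD m)) j ⟨m + m - 1 - (j : ℕ), hlt0⟩ rfl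
        have h3 := step_bstr (tensorDiag p (idD m)) (Sum.inl ⟨m + m - 1 - (j : ℕ), hlt0⟩)
        rw [tp_top_left p ⟨m + m - 1 - (j : ℕ), hlt0⟩ hlt0'] at h3
        have hmk : (⟨((⟨m + m - 1 - (j : ℕ), hlt0⟩ : Fin (m + m)) : ℕ), hlt0'⟩ : Fin m) =
            ⟨m + m - 1 - (j : ℕ), hlt0'⟩ := rfl
        rw [hmk] at h3
        rcases hs : p.pair (Sum.inl ⟨m + m - 1 - (j : ℕ), hlt0'⟩) with i₁ | j₁
        · rw [hs, Sum.map_inl] at h3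
          have hlt1 : m + m - 1 - (i₁ : ℕ) < m + m := by have := i₁.isLt; omega
          have hlt1' : ¬ ((⟨m + m - 1 - (i₁ : ℕ), hlt1⟩ : Fin (m + m)) : ℕ) < m := by
            have := i₁.isLt; simp; omega
          have h4 := step_cap (tensorDiag p (idD m)) (Fin.castAdd m i₁)
            ⟨m + m - 1 - (i₁ : ℕ), hlt1⟩ rfl
          have h5 := step_bstr (tensorDiag p (idD m)) (Sum.inl ⟨m + m - 1 - (i₁ : ℕ), hlt1⟩)
          rw [tp_top_right p ⟨m + m - 1 - (i₁ : ℕ), hlt1⟩ hlt1'] at h5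
          have he : eP m (Sum.inl i₁) = ⟨m + m - 1 - (i₁ : ℕ), hlt1⟩ := rfl
          rw [he]
          exact conn_trans (conn_step h1) (conn_trans (conn_step h2) (conn_trans (conn_step h3)
            (conn_trans (conn_step h4) (conn_step h5))))
        · rw [hs, Sum.map_inr] at h3
          have he : eP m (Sum.inr j₁) = Fin.castAdd m j₁ := rfl
          rw [he]
          exact conn_trans (conn_step h1) (conn_trans (conn_step h2) (conn_step h3))


theorem compD_inner {m : ℕ} (d : K) (p : Diagram m m) :
    compD d (tensorDiag p (idD m)) (capN m) = single (closeD p) := by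
  funext c
  unfold compD single
  by_cases hc : c = closeD p
  · rw [if_pos ((inner_cond p c).mpr hc), if_pos hc, numLoops_inner, pow_zero]
  · rw [if_neg (fun h => hc ((inner_cond p c).mp h)), if_neg hc]

/-! ### The closed-up picture and the Markov trace -/

theorem eqvGen_mono_map {α β : Type} (f : α → β) {r : α → α → Prop} {s : β → β → Prop}
    (h : ∀ x y, r x y → s (f x) (f y)) {x y : α} (hr : Relation.EqvGen r x y) :
    Relation.EqvGen s (f x) (f y) := by
  induction hr with
  | rel _ _ h' => exact .rel _ _ (h _ _ h')
  | refl _ => exact .refl _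
  | symm _ _ _ ih => exact .symm _ _ ih
  | trans _ _ _ _ _ ih1 ih2 => exact .trans _ _ _ ih1 ih2

/-- Embedding of the points of `p` into the middle layer of the stacked
picture of `∪_m ∘ (closure of p)`. -/
def GG (m : ℕ) (z : Fin m ⊕ Fin m) : Pt 0 (m + m) 0 := Sum.inr (Sum.inl (eP m z))

/-- Inverse of `GG`. -/
def FF (m : ℕ) : Pt 0 (m + m) 0 → Fin m ⊕ Fin m
  | .inl i => i.elim0
  | .inr (.inl j) => (eP m).symm j
  | .inr (.inr i) => i.elim0

theorem GG_FF {m : ℕ} : ∀ x : Pt 0 (m + m) 0, GG m (FF m x) = x := by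
  rintro (i | (j | i))
  · exact i.elim0
  · show Sum.inr (Sum.inl (eP m ((eP m).symm j))) = _
    rw [(eP m).apply_symm_apply]
  · exact i.elim0

theorem FF_GG {m : ℕ} (z : Fin m ⊕ Fin m) : FF m (GG m z) = z := by
  show (eP m).symm (eP m z) = z
  rw [(eP m).symm_apply_apply]

theorem all_mid {m : ℕ} : ∀ x : Pt 0 (m + m) 0, ∃ j : Fin (m + m), x = Sum.inr (Sum.inl j) := by
  rintro (i | (j | i))
  · exact i.elim0
  · exact ⟨j, rfl⟩
  · exact i.elim0

theorem step_to_closeStep {m : ℕ} (p : Diagram m m) {x y : Pt 0 (m + m) 0}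
    (h : Step (closeD p) (cupN m) x y) : closeStep p (FF m x) (FF m y) := by
  rcases h with ⟨u, hx, hy⟩ | ⟨u, hx, hy⟩
  · rcases u with i | j
    · exact i.elim0
    · subst hx; subst hy
      left
      show p.pair ((eP m).symm j) =
        FF m (Sum.map id Sum.inl (Sum.inr (eP m (p.pair ((eP m).symm j)))))
      show p.pair ((eP m).symm j) = (eP m).symm (eP m (p.pair ((eP m).symm j)))
      rw [(eP m).symm_apply_apply]
  · rcases u with j | i
    · subst hx; subst hy
      right
      show Sum.elim Sum.inr Sum.inl ((eP m).symm j) =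
        (eP m).symm ⟨m + m - 1 - (j : ℕ), by have := j.isLt; omega⟩
      have hj1 := j.isLt
      by_cases hj : (j : ℕ) < m
      · rw [eP_symm_lt j hj, eP_symm_ge _ (by simp; omega), Sum.elim_inr]
        exact congrArg _ (Fin.ext (by simp; omega))
      · rw [eP_symm_ge j hj, eP_symm_lt _ (by simp; omega), Sum.elim_inl]
    · exact i.elim0

theorem closeStep_to_step {m : ℕ} (p : Diagram m m) {z w : Fin m ⊕ Fin m}
    (h : closeStep p z w) : Step (closeD p) (cupN m) (GG m z) (GG m w) := by
  rcases h with h | h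
  · refine Or.inl ⟨Sum.inr (eP m z), rfl, ?_⟩
    show Sum.map id Sum.inl (Sum.inr (eP m (p.pair ((eP m).symm (eP m z))))) = GG m w
    rw [(eP m).symm_apply_apply, h]
    rfl
  · refine Or.inr ⟨Sum.inl (eP m z), rfl, ?_⟩
    show Sum.inr (Sum.inl (⟨m + m - 1 - ((eP m z) : ℕ), _⟩ : Fin (m + m))) = GG m w
    subst h
    rcases z with i | j
    · have := i.isLt
      exact congrArg _ (congrArg _ (Fin.ext (by simp [eP]; omega)))
    · have := j.isLt
      exact congrArg _ (congrArg _ (Fin.ext (by simp [eP])))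

theorem conn_iff_closeStep {m : ℕ} (p : Diagram m m) (z w : Fin m ⊕ Fin m) :
    Conn (closeD p) (cupN m) (GG m z) (GG m w) ↔ Relation.EqvGen (closeStep p) z w := by
  constructor
  · intro h
    have := eqvGen_mono_map (FF m) (fun _ _ h' => step_to_closeStep p h') h
    rwa [FF_GG, FF_GG] at this
  · exact eqvGen_mono_map (GG m) (fun _ _ h' => closeStep_to_step p h')

theorem numLoops_outer {m : ℕ} (p : Diagram m m) :
    numLoops (closeD p) (cupN m) = trLoops p := by
  unfold numLoops trLoops
  refine Nat.card_congr (Quotient.congr (?_ : _ ≃ (Fin m ⊕ Fin m)) ?_)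
  · exact
      { toFun := fun x => FF m x.1
        invFun := fun z => ⟨GG m z, ⟨eP m z, rfl⟩, fun y _ => all_mid y⟩
        left_inv := fun x => Subtype.ext (GG_FF x.1)
        right_inv := fun z => FF_GG z }
  · intro a b
    show Conn (closeD p) (cupN m) a.1 b.1 ↔ _
    have h := conn_iff_closeStep p (FF m a.1) (FF m b.1)
    rw [GG_FF, GG_FF] at h
    exact h

theorem compD_outer {m : ℕ} (d : K) (p : Diagram m m) (c : Diagram 0 0) :
    compD d (cupN m) (closeD p) c = d ^ trLoops p := by
  unfold compD
  rw [if_pos, numLoops_outer]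
  rintro (i | i) <;> exact i.elim0


/-! ### Unit absorption and the main computation -/

theorem tensorPair_emptyD {m' n' : ℕ} (q : Diagram m' n') :
    tensorPair q emptyD = q.pair := by
  funext x
  rcases x with i | j
  · have h0 : Sum.inl (α := Fin (m' + 0)) (β := Fin (n' + 0)) i =
        (tEquiv m' n' 0 0).symm (Sum.inl (Sum.inl ⟨(i : ℕ), i.isLt⟩)) := by
      rw [tEquiv_symm_inl, Sum.map_inl]
      exact congrArg _ (Fin.ext rfl)
    conv_lhs => rw [h0]
    rw [tensorPair_symm_apply, Sum.map_inl, tEquiv_symm_inl]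
    have h1 : (⟨(i : ℕ), i.isLt⟩ : Fin m') = i := Fin.ext rfl
    rw [h1]
    rcases hs : q.pair (Sum.inl i) with a | b
    · rw [Sum.map_inl]; exact congrArg _ (Fin.ext rfl)
    · rw [Sum.map_inr]; exact congrArg _ (Fin.ext rfl)
  · have h0 : Sum.inr (α := Fin (m' + 0)) (β := Fin (n' + 0)) j =
        (tEquiv m' n' 0 0).symm (Sum.inl (Sum.inr ⟨(j : ℕ), j.isLt⟩)) := by
      rw [tEquiv_symm_inl, Sum.map_inr]
      exact congrArg _ (Fin.ext rfl)
    conv_lhs => rw [h0]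
    rw [tensorPair_symm_apply, Sum.map_inl, tEquiv_symm_inl]
    have h1 : (⟨(j : ℕ), j.isLt⟩ : Fin n') = j := Fin.ext rfl
    rw [h1]
    rcases hs : q.pair (Sum.inr j) with a | b
    · rw [Sum.map_inl]; exact congrArg _ (Fin.ext rfl)
    · rw [Sum.map_inr]; exact congrArg _ (Fin.ext rfl)

theorem tensor_single_emptyD {m' n' : ℕ} (y : Hom K m' n') :
    tensor y (single emptyD) = y := by
  rw [tensor_single_right]
  funext c
  have hD : ∀ p : Diagram m' n', tensorDiag p emptyD = p := fun p =>
    Diagram.ext' (tensorPair_emptyD p)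
  simp only [hD]
  simp [single, mul_ite]

theorem closure_eq {m : ℕ} (d : K) (x : Hom K m m) :
    comp d (single (cupN m)) (comp d (tensor x (idHom K m)) (single (capN m))) =
      fun _ => Tr d x := by
  have hT : tensor x (idHom K m) = fun c => ∑ p, x p * single (tensorDiag p (idD m)) c := by
    rw [show idHom K m = single (idD m) from rfl, tensor_single_right]
  have hA : comp d (tensor x (idHom K m)) (single (capN m)) =
      fun c => ∑ p, x p * single (closeD p) c := by
    rw [comp_single_right]
    funext c
    calc ∑ P, tensor x (idHom K m) P * compD d P (capN m) c
        = ∑ P, ∑ p, x p * single (tensorDiag p (idD m)) P * compD d P (capN m) c := by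
          refine Finset.sum_congr rfl fun P _ => ?_
          rw [hT, Finset.sum_mul]
      _ = ∑ p, ∑ P, x p * single (tensorDiag p (idD m)) P * compD d P (capN m) c :=
          Finset.sum_comm
      _ = ∑ p, x p * single (closeD p) c := by
          refine Finset.sum_congr rfl fun p _ => ?_
          rw [Finset.sum_eq_single (tensorDiag p (idD m))
            (fun P _ hP => by simp [single, hP]) (by simp)]
          rw [compD_inner d p]
          simp [single]
  rw [hA, comp_single_left]
  funext c
  calc ∑ Q, (∑ p, x p * single (closeD p) Q) * compD d (cupN m) Q c
      = ∑ Q, ∑ p, x p * single (closeD p) Q * compD d (cupN m) Q c := by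
        refine Finset.sum_congr rfl fun Q _ => ?_
        rw [Finset.sum_mul]
    _ = ∑ p, ∑ Q, x p * single (closeD p) Q * compD d (cupN m) Q c := Finset.sum_comm
    _ = ∑ p, x p * d ^ trLoops p := by
        refine Finset.sum_congr rfl fun p _ => ?_
        rw [Finset.sum_eq_single (closeD p)
          (fun Q _ hQ => by simp [single, hQ]) (by simp)]
        rw [compD_outer d p c]
        simp [single]
    _ = Tr d x := rfl


/-- Let `K` be a field and `d ∈ K`, and consider the
Temperley–Lieb category over `(K,d)`.  Then every proper ideal of this
category is contained in the set `Negl` of negligible morphisms. -/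
theorem stmt0 (K : Type) [Field K] (d : K)
    (J : ∀ m n : ℕ, Set (Hom K m n)) (hJ : IsIdeal d J) (hproper : IdealProper J) :
    ∀ m n : ℕ, J m n ⊆ Negl d m n := by
  intro m n a ha b
  by_contra hTr
  have hx : comp d b a ∈ J m m := hJ.comp_mem_left b a ha
  set x := comp d b a with hxdef
  have hcl : (fun _ : Diagram 0 0 => Tr d x) ∈ J 0 0 := by
    have h1 := hJ.tensor_mem_left x (idHom K m) hx
    have h2 := hJ.comp_mem_right (tensor x (idHom K m)) (single (capN m)) h1
    have h3 := hJ.comp_mem_left (single (cupN m)) _ h2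
    rwa [closure_eq] at h3
  have hunit : (single emptyD : Hom K 0 0) ∈ J 0 0 := by
    have h4 := hJ.smul_mem 0 0 (Tr d x)⁻¹ _ hcl
    have h5 : (Tr d x)⁻¹ • (fun _ : Diagram 0 0 => Tr d x) = (single emptyD : Hom K 0 0) := by
      funext c
      rw [eq_emptyD c]
      show (Tr d x)⁻¹ * Tr d x = _
      rw [inv_mul_cancel₀ hTr]
      simp [single]
    rwa [h5] at h4
  have hall : ∀ m' n' : ℕ, J m' n' = Set.univ := by
    intro m' n'
    refine Set.eq_univ_of_forall fun y => ?_
    have h6 := hJ.tensor_mem_right y (single emptyD) hunit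
    rwa [tensor_single_emptyD] at h6
  obtain ⟨m0, n0, hne⟩ := hproper
  exact hne (hall m0 n0)

end TL
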